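/- (Comparison Principle.) Let G = (V, ω, μ) be a locally finite connected weighted graph with D_μ < ∞, Ω ⊆ V a finite subset with nonempty interior Ω°, and T > 0. Suppose u, w : [0,T) × Ω → ℝ are bounded, continuous in t on [0,T) and differentiable in t on (0,T), that M₁ ≤ u(t,x) ≤ M₂ and M₁ ≤ w(t,x) ≤ M₂ for all (t,x) ∈ [0,T) × Ω, and that g is continuously differentiable on [M₁, M₂]. If: (i) ∂_t u − Δ_Ω u − g(u) ≥ ∂_t w − Δ_Ω w − g(w) on (0,T) × Ω°; (ii) u(0,x) ≥ w(0,x) for all x ∈ Ω°; (iii) u(t,x) ≥ w(t,x) for all (t,x) ∈ [0,T) × ∂Ω; then u(t,x) ≥ w(t,x) for all (t,x) ∈ [0,T) × Ω. -/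

import Mathlib

/-!
Let `φ t = max 0 (max_{x ∈ Ω°} (w − u)(t, x))`. Since `w ≤ u` on `∂Ω`, at a time `t > 0` the value
`φ t` is either `0` or attained at an interior point `x` where `w − u` is maximal over `Ω`. There
`Δ_Ω (w − u)(x) ≤ 0`, so the differential inequality and the Lipschitz bound `L` of `g` on
`[M₁, M₂]` give `∂ₜ(w − u)(t, x) ≤ L φ t`. Hence the upper right Dini derivative of `φ` is at most
`L φ`, and Gronwall's inequality gives `φ t ≤ φ 0 e^{L t} ≤ 0`.
-/

open Set

/-- The μ-Laplacian on a weighted graph; for `x` in the interior of a finite set `Ω`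
(whose neighbours all lie in `Ω`) this is the Dirichlet Laplacian `Δ_Ω`. -/
noncomputable def graphLap {V : Type*} (ω : V → V → ℝ) (μ : V → ℝ)
    (h : V → ℝ) (x : V) : ℝ :=
  (∑' y, ω x y * (h y - h x)) / μ x

open Classical in
/-- The boundary `∂Ω = {x ∈ Ω : ∃ y ∉ Ω, y ~ x}` of a finite subset of a weighted graph. -/
noncomputable def graphBoundary {V : Type*} (ω : V → V → ℝ) (Ω : Finset V) : Finset V :=
  Ω.filter fun x => ∃ y ∉ Ω, 0 < ω x y

open Classical in
/-- The interior `Ω° = Ω \ ∂Ω` of a finite subset of a weighted graph: the points of `Ω`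
all of whose neighbours lie in `Ω`. -/
noncomputable def graphInterior {V : Type*} (ω : V → V → ℝ) (Ω : Finset V) : Finset V :=
  Ω.filter fun x => ∀ y, 0 < ω x y → y ∈ Ω

open Filter Topology
open scoped NNReal

theorem eventually_slope_sup'_lt {ι : Type*} {s : Finset ι} (hs : s.Nonempty)
    {f : ι → ℝ → ℝ} {f' : ι → ℝ} {t r : ℝ}
    (hf : ∀ i ∈ s, HasDerivWithinAt (f i) (f' i) (Ioi t) t)
    (hr : ∀ i ∈ s, f i t = s.sup' hs (f · t) → f' i < r) :
    ∀ᶠ z in 𝓝[>] t, slope (fun τ ↦ s.sup' hs (f · τ)) t z < r := by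
  obtain ⟨j, hj, hjt⟩ := s.exists_mem_eq_sup' hs (f · t)
  have hall : ∀ᶠ z in 𝓝[>] t, ∀ i ∈ s,
      f i z = s.sup' hs (f · z) → f i t = s.sup' hs (f · t) ∧ slope (f i) t z < r := by
    rw [eventually_all_finset]
    intro i hi
    by_cases hit : f i t = s.sup' hs (f · t)
    · have hslope := (hasDerivWithinAt_iff_tendsto_slope' self_notMem_Ioi).1 (hf i hi)
      filter_upwards [hslope.eventually (gt_mem_nhds (hr i hi hit))] with z hz _ using ⟨hit, hz⟩
    · -- an index that is not active at `t` stays below the active index `j` near `t`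
      have hlt : f i t < f j t := hjt ▸ (s.le_sup' (f · t) hi).lt_of_ne hit
      filter_upwards [(hf i hi).continuousWithinAt.eventually_lt
        (hf j hj).continuousWithinAt hlt] with z hz hzi
      exact absurd hzi (hz.trans_le (s.le_sup' (f · z) hj)).ne
  filter_upwards [hall] with z hz
  obtain ⟨i, hi, hzi⟩ := s.exists_mem_eq_sup' hs (f · z)
  obtain ⟨hit, hslope⟩ := hz i hi hzi.symm
  simpa only [slope_def_field, hzi, ← hit] using hslope

theorem le_mul_exp_of_liminf_slope_right_le {φ : ℝ → ℝ} {K a b : ℝ}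
    (hφ : ContinuousOn φ (Ico a b))
    (hslope : ∀ t ∈ Ioo a b, ∀ r, K * φ t < r → ∃ᶠ z in 𝓝[>] t, slope φ t z < r) :
    ∀ t ∈ Ico a b, φ t ≤ φ a * Real.exp (K * (t - a)) := by
  rintro t ⟨hat, htb⟩
  rcases hat.eq_or_lt with rfl | hat
  · simp
  have hgronwall : ∀ c ∈ Ioo a t, φ t ≤ φ c * Real.exp (K * (t - c)) := by
    intro c hc
    have hcb : Icc c t ⊆ Ico a b := Icc_subset_Ico hc.1.le htb
    simpa [gronwallBound_ε0] using le_gronwallBound_of_liminf_deriv_right_le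
      (hφ.mono hcb)
      (fun s hs r hr ↦ hslope s ⟨hc.1.trans_le hs.1, hs.2.trans htb⟩ r hr)
      le_rfl (fun _ _ ↦ (add_zero _).ge) t ⟨hc.2.le, le_rfl⟩
  have hlim : Tendsto (fun c ↦ φ c * Real.exp (K * (t - c))) (𝓝[>] a)
      (𝓝 (φ a * Real.exp (K * (t - a)))) := by
    have hφa : Tendsto φ (𝓝[>] a) (𝓝 (φ a)) :=
      ((hφ a ⟨le_rfl, hat.trans htb⟩).mono_of_mem_nhdsWithin
        (Ico_mem_nhdsGT (hat.trans htb))).tendsto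
    exact hφa.mul ((Continuous.tendsto (by fun_prop) a).mono_left nhdsWithin_le_nhds)
  exact ge_of_tendsto hlim (eventually_of_mem (Ioo_mem_nhdsGT hat) hgronwall)

namespace Finset

variable {ι : Type*} (s : Finset ι)

/-- `max 0 (max_{i ∈ s} v i)`: the extra index `none` of `s.insertNone` carries the value `0`. -/
noncomputable def supPos (v : ι → ℝ) : ℝ :=
  s.insertNone.sup' insertNone_nonempty fun o ↦ o.elim 0 v

variable {s} {v : ι → ℝ}

theorem zero_le_supPos : 0 ≤ s.supPos v :=
  le_sup' (fun o ↦ o.elim 0 v) none_mem_insertNone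

theorem le_supPos {i : ι} (hi : i ∈ s) : v i ≤ s.supPos v :=
  le_sup' (fun o ↦ o.elim 0 v) (some_mem_insertNone.2 hi)

theorem supPos_le {c : ℝ} (h0 : 0 ≤ c) (h : ∀ i ∈ s, v i ≤ c) : s.supPos v ≤ c :=
  sup'_le _ _ (forall_mem_insertNone.2 ⟨h0, h⟩)

theorem continuousOn_supPos {v : ℝ → ι → ℝ} {S : Set ℝ}
    (hv : ∀ i ∈ s, ContinuousOn (fun τ ↦ v τ i) S) : ContinuousOn (fun τ ↦ s.supPos (v τ)) S :=
  ContinuousOn.finset_sup'_apply _ (forall_mem_insertNone.2 ⟨continuousOn_const, hv⟩)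

theorem eventually_slope_supPos_lt {v : ℝ → ι → ℝ} {v' : ι → ℝ} {t r : ℝ}
    (hv : ∀ i ∈ s, HasDerivWithinAt (fun τ ↦ v τ i) (v' i) (Set.Ioi t) t) (hr₀ : 0 < r)
    (hr : ∀ i ∈ s, v t i = s.supPos (v t) → v' i < r) :
    ∀ᶠ z in 𝓝[>] t, slope (fun τ ↦ s.supPos (v τ)) t z < r :=
  eventually_slope_sup'_lt (s := s.insertNone) (f := fun o τ ↦ o.elim 0 (v τ))
    (f' := fun o ↦ o.elim 0 v') insertNone_nonempty
    (forall_mem_insertNone.2 ⟨hasDerivWithinAt_const _ _ _, hv⟩)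
    (forall_mem_insertNone.2 ⟨fun _ ↦ hr₀, hr⟩)

end Finset

section WeightedGraph

variable {V : Type*} {ω : V → V → ℝ} {μ : V → ℝ} {Ω : Finset V} {x : V}

theorem mem_graphInterior : x ∈ graphInterior ω Ω ↔ x ∈ Ω ∧ ∀ y, 0 < ω x y → y ∈ Ω := by
  simp [graphInterior]

theorem mem_graphBoundary : x ∈ graphBoundary ω Ω ↔ x ∈ Ω ∧ ∃ y ∉ Ω, 0 < ω x y := by
  simp [graphBoundary]

theorem graphInterior_subset : graphInterior ω Ω ⊆ Ω :=
  fun _ hx ↦ (mem_graphInterior.1 hx).1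

theorem mem_graphInterior_or_mem_graphBoundary (hx : x ∈ Ω) :
    x ∈ graphInterior ω Ω ∨ x ∈ graphBoundary ω Ω := by
  by_cases h : ∃ y ∉ Ω, 0 < ω x y
  · exact .inr (mem_graphBoundary.2 ⟨hx, h⟩)
  · refine .inl (mem_graphInterior.2 ⟨hx, fun y hxy ↦ ?_⟩)
    by_contra hy
    exact h ⟨y, hy, hxy⟩

theorem graphLap_sub (hfin : (Function.support (ω x)).Finite) (f h : V → ℝ) :
    graphLap ω μ (f - h) x = graphLap ω μ f x - graphLap ω μ h x := by
  have hsum : ∀ f : V → ℝ, Summable fun y ↦ ω x y * (f y - f x) := fun f ↦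
    summable_of_ne_finset_zero (s := hfin.toFinset) fun y hy ↦ by
      simp [Function.notMem_support.1 (by simpa using hy)]
  rw [graphLap, graphLap, graphLap, ← sub_div, ← (hsum f).tsum_sub (hsum h)]
  congr 1
  exact tsum_congr fun y ↦ by simp only [Pi.sub_apply]; ring

theorem graphLap_nonpos_of_forall_le {h : V → ℝ} (hω : ∀ y, 0 ≤ ω x y) (hμ : 0 ≤ μ x)
    (hle : ∀ y, 0 < ω x y → h y ≤ h x) : graphLap ω μ h x ≤ 0 := by
  refine div_nonpos_of_nonpos_of_nonneg (tsum_nonpos fun y ↦ ?_) hμ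
  rcases (hω y).eq_or_lt with hxy | hxy
  · simp [← hxy]
  · exact mul_nonpos_of_nonneg_of_nonpos hxy.le (sub_nonpos.2 (hle y hxy))

theorem sub_le_mul_abs_of_forall_sub_le {a b : V → ℝ} {a' b' : ℝ} {g : ℝ → ℝ} {K : ℝ≥0}
    {S : Set ℝ} (hω : ∀ y, 0 ≤ ω x y) (hμ : 0 ≤ μ x) (hfin : (Function.support (ω x)).Finite)
    (hg : LipschitzOnWith K g S) (ha : a x ∈ S) (hb : b x ∈ S)
    (hmax : ∀ y, 0 < ω x y → a y - b y ≤ a x - b x)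
    (hineq : a' - graphLap ω μ a x - g (a x) ≤ b' - graphLap ω μ b x - g (b x)) :
    a' - b' ≤ K * |a x - b x| := by
  have hlap : graphLap ω μ a x - graphLap ω μ b x ≤ 0 := by
    rw [← graphLap_sub hfin]
    exact graphLap_nonpos_of_forall_le hω hμ hmax
  have hlip : g (a x) - g (b x) ≤ K * |a x - b x| := by
    simpa [Real.dist_eq] using (le_abs_self _).trans (hg.dist_le_mul _ ha _ hb)
  linarith

theorem sub_apply_le_supPos {a b : V → ℝ} (hx : x ∈ Ω)
    (hbdry : ∀ y ∈ graphBoundary ω Ω, a y ≤ b y) :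
    (a - b) x ≤ (graphInterior ω Ω).supPos (a - b) := by
  rcases mem_graphInterior_or_mem_graphBoundary hx with hint | hbd
  · exact Finset.le_supPos hint
  · exact (sub_nonpos.2 (hbdry x hbd)).trans Finset.zero_le_supPos

theorem sub_le_mul_supPos_of_eq_supPos {a b : V → ℝ} {a' b' : ℝ} {g : ℝ → ℝ} {K : ℝ≥0}
    {S : Set ℝ} (hx : x ∈ graphInterior ω Ω) (hω : ∀ y, 0 ≤ ω x y) (hμ : 0 ≤ μ x)
    (hfin : (Function.support (ω x)).Finite) (hg : LipschitzOnWith K g S) (ha : a x ∈ S)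
    (hb : b x ∈ S) (hbdry : ∀ y ∈ graphBoundary ω Ω, a y ≤ b y)
    (hmax : (a - b) x = (graphInterior ω Ω).supPos (a - b))
    (hineq : a' - graphLap ω μ a x - g (a x) ≤ b' - graphLap ω μ b x - g (b x)) :
    a' - b' ≤ K * (graphInterior ω Ω).supPos (a - b) := by
  have hnbr := (mem_graphInterior.1 hx).2
  calc a' - b' ≤ K * |a x - b x| := sub_le_mul_abs_of_forall_sub_le hω hμ hfin hg ha hb
        (fun y hy ↦ (sub_apply_le_supPos (hnbr y hy) hbdry).trans hmax.ge) hineq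
    _ = K * (graphInterior ω Ω).supPos (a - b) := by
      rw [← Pi.sub_apply, hmax, abs_of_nonneg Finset.zero_le_supPos]

end WeightedGraph

theorem comparison_principle_general
    {V : Type*} (ω : V → V → ℝ) (μ : V → ℝ)
    (hwnn : ∀ x y, 0 ≤ ω x y)
    (hμpos : ∀ x, 0 < μ x)
    (hlocfin : ∀ x, {y | 0 < ω x y}.Finite)
    (Ω : Finset V)
    (T : ℝ)
    (M₁ M₂ : ℝ) (g : ℝ → ℝ) (hg : ContDiffOn ℝ 1 g (Icc M₁ M₂))
    (u u' w w' : ℝ → V → ℝ)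
    (hu_rng : ∀ t ∈ Ico (0:ℝ) T, ∀ x ∈ Ω, u t x ∈ Icc M₁ M₂)
    (hw_rng : ∀ t ∈ Ico (0:ℝ) T, ∀ x ∈ Ω, w t x ∈ Icc M₁ M₂)
    (hu_cont : ∀ x ∈ Ω, ContinuousOn (fun t => u t x) (Ico (0:ℝ) T))
    (hw_cont : ∀ x ∈ Ω, ContinuousOn (fun t => w t x) (Ico (0:ℝ) T))
    (hu_deriv : ∀ x ∈ Ω, ∀ t ∈ Ioo (0:ℝ) T, HasDerivAt (fun s => u s x) (u' t x) t)
    (hw_deriv : ∀ x ∈ Ω, ∀ t ∈ Ioo (0:ℝ) T, HasDerivAt (fun s => w s x) (w' t x) t)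
    (hineq : ∀ t ∈ Ioo (0:ℝ) T, ∀ x ∈ graphInterior ω Ω,
      w' t x - graphLap ω μ (w t) x - g (w t x) ≤
        u' t x - graphLap ω μ (u t) x - g (u t x))
    (hinit : ∀ x ∈ graphInterior ω Ω, w 0 x ≤ u 0 x)
    (hbdry : ∀ t ∈ Ico (0:ℝ) T, ∀ x ∈ graphBoundary ω Ω, w t x ≤ u t x) :
    ∀ t ∈ Ico (0:ℝ) T, ∀ x ∈ Ω, w t x ≤ u t x := by
  obtain ⟨L, hL⟩ := hg.exists_lipschitzOnWith one_ne_zero (convex_Icc M₁ M₂) isCompact_Icc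
  set φ : ℝ → ℝ := fun t ↦ (graphInterior ω Ω).supPos (w t - u t)
  have hsupport (x : V) : (Function.support (ω x)).Finite :=
    (hlocfin x).subset fun y hy ↦ (hwnn x y).lt_of_ne' hy
  have hslope : ∀ t ∈ Ioo (0:ℝ) T, ∀ r, L * φ t < r → ∃ᶠ z in 𝓝[>] t, slope φ t z < r := by
    intro t ht r hr
    have ht' : t ∈ Ico (0:ℝ) T := Ioo_subset_Ico_self ht
    refine (Finset.eventually_slope_supPos_lt (v' := w' t - u' t) (fun x hx ↦ ?_)
      ((mul_nonneg L.2 Finset.zero_le_supPos).trans_lt hr) fun x hx hmax ↦ ?_).frequently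
    · have hxΩ := graphInterior_subset hx
      exact ((hw_deriv x hxΩ t ht).sub (hu_deriv x hxΩ t ht)).hasDerivWithinAt
    · have hxΩ := graphInterior_subset hx
      exact (sub_le_mul_supPos_of_eq_supPos hx (hwnn x) (hμpos x).le (hsupport x) hL
        (hw_rng t ht' x hxΩ) (hu_rng t ht' x hxΩ) (hbdry t ht') hmax (hineq t ht x hx)).trans_lt hr
  have hφ_cont : ContinuousOn φ (Ico 0 T) := Finset.continuousOn_supPos fun x hx ↦
    (hw_cont x (graphInterior_subset hx)).sub (hu_cont x (graphInterior_subset hx))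
  have hφ_zero : φ 0 ≤ 0 := Finset.supPos_le le_rfl fun x hx ↦ sub_nonpos.2 (hinit x hx)
  intro t ht x hx
  have hφ_t : φ t ≤ 0 := (le_mul_exp_of_liminf_slope_right_le hφ_cont hslope t ht).trans
    (mul_nonpos_of_nonpos_of_nonneg hφ_zero (Real.exp_pos _).le)
  exact sub_nonpos.1 ((sub_apply_le_supPos hx (hbdry t ht)).trans hφ_t)

/-- Comparison principle: if `∂ₜu − Δ_Ω u − g(u) ≥ ∂ₜw − Δ_Ω w − g(w)` on `(0,T) × Ω°`,
`u(0,·) ≥ w(0,·)` on `Ω°`, `u ≥ w` on `[0,T) × ∂Ω`, with `M₁ ≤ u, w ≤ M₂` and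
`g ∈ C¹[M₁,M₂]`, then `u ≥ w` on `[0,T) × Ω`. -/
theorem comparison_principle
    {V : Type*} [Countable V] (ω : V → V → ℝ) (μ : V → ℝ)
    (hsymm : ∀ x y, ω x y = ω y x)
    (hwnn : ∀ x y, 0 ≤ ω x y)
    (hμpos : ∀ x, 0 < μ x)
    (hlocfin : ∀ x, {y | 0 < ω x y}.Finite)
    (hdeg : ∀ x, ∃ y, 0 < ω x y)
    (hconn : ∀ x y, Relation.ReflTransGen (fun a b => 0 < ω a b) x y)
    (Dμ : ℝ) (hDμ : ∀ x, (∑' y, ω x y) / μ x ≤ Dμ)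
    (Ω : Finset V) (hΩne : Ω.Nonempty) (hΩint : (graphInterior ω Ω).Nonempty)
    (T : ℝ) (hT : 0 < T)
    (M₁ M₂ : ℝ) (g : ℝ → ℝ) (hg : ContDiffOn ℝ 1 g (Icc M₁ M₂))
    (u u' w w' : ℝ → V → ℝ)
    (hu_rng : ∀ t ∈ Ico (0:ℝ) T, ∀ x ∈ Ω, u t x ∈ Icc M₁ M₂)
    (hw_rng : ∀ t ∈ Ico (0:ℝ) T, ∀ x ∈ Ω, w t x ∈ Icc M₁ M₂)
    (hu_cont : ∀ x ∈ Ω, ContinuousOn (fun t => u t x) (Ico (0:ℝ) T))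
    (hw_cont : ∀ x ∈ Ω, ContinuousOn (fun t => w t x) (Ico (0:ℝ) T))
    (hu_deriv : ∀ x ∈ Ω, ∀ t ∈ Ioo (0:ℝ) T, HasDerivAt (fun s => u s x) (u' t x) t)
    (hw_deriv : ∀ x ∈ Ω, ∀ t ∈ Ioo (0:ℝ) T, HasDerivAt (fun s => w s x) (w' t x) t)
    (hineq : ∀ t ∈ Ioo (0:ℝ) T, ∀ x ∈ graphInterior ω Ω,
      w' t x - graphLap ω μ (w t) x - g (w t x) ≤
        u' t x - graphLap ω μ (u t) x - g (u t x))
    (hinit : ∀ x ∈ graphInterior ω Ω, w 0 x ≤ u 0 x)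
    (hbdry : ∀ t ∈ Ico (0:ℝ) T, ∀ x ∈ graphBoundary ω Ω, w t x ≤ u t x) :
    ∀ t ∈ Ico (0:ℝ) T, ∀ x ∈ Ω, w t x ≤ u t x :=
  comparison_principle_general ω μ hwnn hμpos hlocfin Ω T M₁ M₂ g hg u u' w w' hu_rng hw_rng hu_cont
    hw_cont hu_deriv hw_deriv hineq hinit hbdry
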